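/- arXiv:1107.5552 — 3 statements merged into one kernel-verified Lean document; each statement's English description precedes it below -/
import Mathlib

section
/- Trek rule: Let G=(V,D,B) be an acyclic mixed graph, let Λ be a real m×m matrix with λ_vw=0 whenever v→w∉D, and let Ω be a symmetric real m×m matrix with ω_vw=0 whenever v≠w and v↔w∉B. Then I−Λ is invertible and, for all v,w∈V, the (v,w) entry of Σ=(I−Λ)^{−T}Ω(I−Λ)^{−1} equals the sum, over the (finitely many) treks π from v to w in G, of the trek monomials π(λ,ω). -/
open scoped Classical Matrix

/-- A mixed graph `G = (V, D, B)`: a finite vertex set `V`, a set `D` of directed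
edges, and a symmetric set `B` of bidirected edges; no self-loops. -/
structure MixedGraph (V : Type*) [Fintype V] [DecidableEq V] where
  D : Finset (V × V)
  B : Finset (V × V)
  B_symm : ∀ v w : V, (v, w) ∈ B → (w, v) ∈ B
  D_irrefl : ∀ v : V, (v, v) ∉ D
  B_irrefl : ∀ v : V, (v, v) ∉ B

namespace MixedGraph

variable {V : Type*} [Fintype V] [DecidableEq V]

/-- The parents of `v`: nodes `w` with `w → v ∈ D`. -/
def pa (G : MixedGraph V) (v : V) : Finset V :=
  Finset.univ.filter fun w => (w, v) ∈ G.D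

/-- The siblings of `v`: nodes `w` with `w ↔ v ∈ B`. -/
def sib (G : MixedGraph V) (v : V) : Finset V :=
  Finset.univ.filter fun w => (w, v) ∈ G.B

/-- A trek: a walk with no colliding arrowheads.  The field `left` lists the nodes of the
left-hand side from top (head) to source (last); `right` lists the nodes of the right-hand
side from top (head) to target (last); consecutive nodes in each list are joined by directed
edges pointing away from the head.  If `hasBidir` then the two heads are joined by a
bidirected edge, otherwise they coincide (the top node). -/
structure Trek (G : MixedGraph V) where
  left : List V
  right : List V
  left_ne : left ≠ []
  right_ne : right ≠ []
  hasBidir : Bool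
  left_chain : left.Chain' fun a b => (a, b) ∈ G.D
  right_chain : right.Chain' fun a b => (a, b) ∈ G.D
  head_cond : if hasBidir then (left.head left_ne, right.head right_ne) ∈ G.B
              else left.head left_ne = right.head right_ne

namespace Trek

variable {G : MixedGraph V}

/-- The source of a trek. -/
def source (π : G.Trek) : V := π.left.getLast π.left_ne

/-- The target of a trek. -/
def target (π : G.Trek) : V := π.right.getLast π.right_ne

/-- The left-hand side `Left(π)` of a trek, as a set of nodes. -/
def leftSet (π : G.Trek) : Finset V := π.left.toFinset

/-- The right-hand side `Right(π)` of a trek, as a set of nodes. -/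
def rightSet (π : G.Trek) : Finset V := π.right.toFinset

/-- A half-trek is a trek whose left-hand side consists of exactly one node. -/
def IsHalfTrek (π : G.Trek) : Prop := π.leftSet.card = 1

/-- The number of directed edges traversed by the trek. -/
def nEdges (π : G.Trek) : ℕ := (π.left.length - 1) + (π.right.length - 1)

end Trek

/-- `htr v`: the set of nodes `w ∉ {v} ∪ sib(v)` reachable from `v` by a half-trek
containing at least one directed edge. -/
def htr (G : MixedGraph V) (v : V) : Set V :=
  {w | w ≠ v ∧ w ∉ G.sib v ∧
    ∃ π : G.Trek, π.source = v ∧ π.target = w ∧ π.IsHalfTrek ∧ 1 ≤ π.nEdges}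

/-- `f` encodes a system of treks from `Y` to `P`: treks with pairwise distinct sources
forming `Y` and pairwise distinct targets forming `P`. -/
def IsTrekSystem (G : MixedGraph V) (Y P : Finset V) (f : V → G.Trek) : Prop :=
  (∀ y ∈ Y, (f y).source = y) ∧
  (Y.image fun y => (f y).target) = P ∧
  ∀ y ∈ Y, ∀ y' ∈ Y, y ≠ y' → (f y).target ≠ (f y').target

/-- The treks `f y`, `y ∈ Y`, have no sided intersection. -/
def NoSidedIntersection (G : MixedGraph V) (Y : Finset V) (f : V → G.Trek) : Prop :=
  ∀ y ∈ Y, ∀ y' ∈ Y, y ≠ y' →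
    Disjoint (f y).leftSet (f y').leftSet ∧ Disjoint (f y).rightSet (f y').rightSet

/-- `Y` satisfies the half-trek criterion with respect to `v`. -/
def SatisfiesHTC (G : MixedGraph V) (v : V) (Y : Finset V) : Prop :=
  Y.card = (G.pa v).card ∧
  (∀ y ∈ Y, y ≠ v ∧ y ∉ G.sib v) ∧
  ∃ f : V → G.Trek, (∀ y ∈ Y, (f y).IsHalfTrek) ∧
    G.IsTrekSystem Y (G.pa v) f ∧ G.NoSidedIntersection Y f

/-- `Y` satisfies the weak half-trek criterion with respect to `v`. -/
def SatisfiesWeakHTC (G : MixedGraph V) (v : V) (Y : Finset V) : Prop :=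
  Y.card = (G.pa v).card ∧
  (∀ y ∈ Y, y ≠ v ∧ y ∉ G.sib v) ∧
  ∃ f : V → G.Trek, (∀ y ∈ Y, y ∈ G.htr v → (f y).IsHalfTrek) ∧
    G.IsTrekSystem Y (G.pa v) f ∧ G.NoSidedIntersection Y f

/-- `G` is HTC-identifiable. -/
def HTCIdentifiable (G : MixedGraph V) : Prop :=
  ∃ Y : V → Finset V,
    (∀ v, G.SatisfiesHTC v (Y v)) ∧
    ∃ r : V → V → Prop, IsStrictTotalOrder V r ∧
      ∀ v w, w ∈ Y v → w ∈ G.htr v → r w v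

/-- `G` is HTC-infinite-to-one. -/
def HTCInfiniteToOne (G : MixedGraph V) : Prop :=
  ∀ Y : V → Finset V,
    (∃ v, ¬ G.SatisfiesHTC v (Y v)) ∨ ∃ v w, v ∈ Y w ∧ w ∈ Y v

/-- `G` is acyclic: no directed cycle can be formed from the edges in `D`. -/
def Acyclic (G : MixedGraph V) : Prop :=
  ∀ v : V, ¬ Relation.TransGen (fun a b => (a, b) ∈ G.D) v v

/-- `G` is simple: at most one edge between any pair of nodes. -/
def Simple (G : MixedGraph V) : Prop :=
  (∀ e ∈ G.D, e ∉ G.B) ∧ ∀ v w : V, (v, w) ∈ G.D → (w, v) ∉ G.D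

/-- `ℝ^D_reg`: real matrices supported on `D` with `I - Λ` invertible. -/
def RDreg (G : MixedGraph V) : Set (Matrix V V ℝ) :=
  {Λ | (∀ v w, (v, w) ∉ G.D → Λ v w = 0) ∧ IsUnit (1 - Λ).det}

/-- `PD(B)`: positive definite symmetric matrices supported on the diagonal and `B`. -/
def PDB (G : MixedGraph V) : Set (Matrix V V ℝ) :=
  {Ω | Ω.PosDef ∧ ∀ v w, v ≠ w → (v, w) ∉ G.B → Ω v w = 0}

/-- The parameter space `Θ = ℝ^D_reg × PD(B)`. -/
def Theta (G : MixedGraph V) : Set (Matrix V V ℝ × Matrix V V ℝ) :=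
  {θ | θ.1 ∈ G.RDreg ∧ θ.2 ∈ G.PDB}

/-- The parametrization `φ(Λ, Ω) = (I-Λ)^{-T} Ω (I-Λ)^{-1}`. -/
noncomputable def phi {R : Type*} [CommRing R] (Λ Ω : Matrix V V R) : Matrix V V R :=
  ((1 - Λ)⁻¹)ᵀ * Ω * (1 - Λ)⁻¹

/-- Evaluation of a polynomial in the coordinates `λ_vw` (left summand) and `ω_vw`
(right summand) at a parameter point `θ = (Λ, Ω)`. -/
noncomputable def evalParam (θ : Matrix V V ℝ × Matrix V V ℝ)
    (p : MvPolynomial ((V × V) ⊕ (V × V)) ℝ) : ℝ :=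
  MvPolynomial.eval (Sum.elim (fun e => θ.1 e.1 e.2) (fun e => θ.2 e.1 e.2)) p

/-- `V₀` is a proper algebraic subset of `Θ`: the intersection with `Θ` of the zero set of a
polynomial in the coordinates that does not vanish identically on `Θ`. -/
def IsProperAlgebraic (G : MixedGraph V)
    (V₀ : Set (Matrix V V ℝ × Matrix V V ℝ)) : Prop :=
  ∃ p : MvPolynomial ((V × V) ⊕ (V × V)) ℝ,
    (∃ θ ∈ G.Theta, evalParam θ p ≠ 0) ∧
    V₀ = {θ ∈ G.Theta | evalParam θ p = 0}

/-- Evaluation of a polynomial in the entries of a covariance matrix. -/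
noncomputable def evalAtCov (S : Matrix V V ℝ) (p : MvPolynomial (V × V) ℝ) : ℝ :=
  MvPolynomial.eval (fun e => S e.1 e.2) p

/-- `G` is rationally identifiable: some rational map `ψ` (each coordinate a quotient of
polynomials in the entries of the covariance matrix) satisfies `ψ ∘ φ_G = id` off a proper
algebraic subset of `Θ`. -/
def RationallyIdentifiable (G : MixedGraph V) : Prop :=
  ∃ V₀, G.IsProperAlgebraic V₀ ∧
    ∃ p q : ((V × V) ⊕ (V × V)) → MvPolynomial (V × V) ℝ,
      ∀ θ ∈ G.Theta \ V₀,
        (∀ i, evalAtCov (phi θ.1 θ.2) (q i) ≠ 0) ∧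
        (∀ v w : V, θ.1 v w * evalAtCov (phi θ.1 θ.2) (q (Sum.inl (v, w)))
            = evalAtCov (phi θ.1 θ.2) (p (Sum.inl (v, w)))) ∧
        (∀ v w : V, θ.2 v w * evalAtCov (phi θ.1 θ.2) (q (Sum.inr (v, w)))
            = evalAtCov (phi θ.1 θ.2) (p (Sum.inr (v, w))))

/-- `G` is generically identifiable: `φ_G` is injective off a proper algebraic subset. -/
def GenericallyIdentifiable (G : MixedGraph V) : Prop :=
  ∃ V₀, G.IsProperAlgebraic V₀ ∧
    Set.InjOn (fun θ : Matrix V V ℝ × Matrix V V ℝ => phi θ.1 θ.2) (G.Theta \ V₀)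

/-- `φ_G` is generically infinite-to-one. -/
def GenInfiniteToOne (G : MixedGraph V) : Prop :=
  ∃ V₀, G.IsProperAlgebraic V₀ ∧
    ∀ θ ∈ G.Theta \ V₀,
      {θ' ∈ G.Theta | phi θ'.1 θ'.2 = phi θ.1 θ.2}.Infinite

end MixedGraph

namespace MixedGraph

variable {V : Type*} [Fintype V] [DecidableEq V]

/-- The product of the coefficients `Λ x y` over the directed edges `x → y` traversed by a
list of nodes. -/
def edgeProd (Λ : Matrix V V ℝ) (l : List V) : ℝ :=
  ((l.zip l.tail).map fun e => Λ e.1 e.2).prod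

/-- The trek monomial `π(λ, ω)`: the covariance `ω` at the top (pair of) node(s) times the
product of the coefficients `λ` along all directed edges of the trek. -/
def Trek.monomial {G : MixedGraph V} (Λ Ω : Matrix V V ℝ) (π : G.Trek) : ℝ :=
  Ω (π.left.head π.left_ne) (π.right.head π.right_ne) *
    edgeProd Λ π.left * edgeProd Λ π.right

end MixedGraph

/-!
Acyclicity makes `Λ` nilpotent: a nonzero entry of `Λ ^ k` needs a directed walk with `k` edges,
whose `k + 1` nodes are distinct. Hence `(I - Λ)⁻¹ = ∑_{k < m} Λ ^ k`, and its `(a, v)` entry is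
the sum of the edge products of the directed paths from `a` to `v`. Expanding
`Σ = (I - Λ)⁻ᵀ Ω (I - Λ)⁻¹` entrywise gives a sum over pairs of paths ending at `v` and `w`,
weighted by `ω` at their initial nodes; the pairs of nonzero weight are exactly the two sides of
the treks from `v` to `w`.
-/

namespace MixedGraph

open Finset

variable {V : Type*}

@[simp] lemma edgeProd_singleton (Λ : Matrix V V ℝ) (x : V) : edgeProd Λ [x] = 1 := by
  simp [edgeProd]

@[simp] lemma edgeProd_cons_cons (Λ : Matrix V V ℝ) (x y : V) (t : List V) :
    edgeProd Λ (x :: y :: t) = Λ x y * edgeProd Λ (y :: t) := by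
  simp [edgeProd]

variable [Fintype V] [DecidableEq V]

/-- Node lists `[x₀, …, x_k]` ending at `v`; weighted by `edgeProd Λ`, they are the walks with
`k` edges that make up `(Λ ^ k) x₀ v`. -/
def walksTo : ℕ → V → Finset (List V)
  | 0, v => {[v]}
  | k + 1, v => (univ ×ˢ walksTo k v).image fun p => p.1 :: p.2

lemma mem_walksTo {k : ℕ} {v : V} {l : List V} :
    l ∈ walksTo k v ↔ l.length = k + 1 ∧ l.getLast? = some v := by
  induction k generalizing l with
  | zero =>
    rcases l with _ | ⟨x, _ | ⟨y, t⟩⟩ <;> simp [walksTo, eq_comm]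
  | succ k ih =>
    rcases l with _ | ⟨x, t⟩
    · simp [walksTo]
    · rcases t with _ | ⟨y, t⟩ <;> simp [walksTo, ih, List.getLast?_cons_cons]

def walksToLT (N : ℕ) (v : V) : Finset (List V) :=
  (range N).biUnion (walksTo · v)

lemma mem_walksToLT {N : ℕ} {v : V} {l : List V} :
    l ∈ walksToLT N v ↔ l ≠ [] ∧ l.length ≤ N ∧ l.getLast? = some v := by
  simp only [walksToLT, mem_biUnion, mem_range, mem_walksTo]
  constructor
  · rintro ⟨k, hk, hlen, hlast⟩
    exact ⟨List.ne_nil_of_length_pos (by omega), by omega, hlast⟩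
  · rintro ⟨hne, hlen, hlast⟩
    have := List.length_pos_of_ne_nil hne
    exact ⟨l.length - 1, by omega, by omega, hlast⟩

lemma vecMul_pow_apply (Λ : Matrix V V ℝ) (f : V → ℝ) (k : ℕ) (v : V) :
    (f ᵥ* Λ ^ k) v = ∑ l ∈ walksTo k v, f (l.headD v) * edgeProd Λ l := by
  induction k generalizing f with
  | zero => simp [walksTo]
  | succ k ih =>
    rw [pow_succ', ← Matrix.vecMul_vecMul, ih, walksTo,
      sum_image fun _ _ _ _ h => by simpa [Prod.ext_iff] using h, sum_product_right]
    refine sum_congr rfl fun l hl => ?_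
    obtain ⟨y, t, rfl⟩ := List.exists_cons_of_ne_nil (l := l)
      (List.ne_nil_of_length_pos (by simp [(mem_walksTo.mp hl).1]))
    simp [Matrix.vecMul, dotProduct, sum_mul, mul_assoc]

lemma inv_one_sub_eq_sum_pow {R : Type*} [CommRing R] {Λ : Matrix V V R} {N : ℕ}
    (h : Λ ^ N = 0) : (1 - Λ)⁻¹ = ∑ k ∈ range N, Λ ^ k :=
  Matrix.inv_eq_left_inv <| by rw [geom_sum_mul_neg, h, sub_zero]

lemma vecMul_inv_one_sub_apply {Λ : Matrix V V ℝ} {N : ℕ} (hnil : Λ ^ N = 0) (f : V → ℝ) (v : V) :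
    (f ᵥ* (1 - Λ)⁻¹) v = ∑ l ∈ walksToLT N v, f (l.headD v) * edgeProd Λ l := by
  rw [inv_one_sub_eq_sum_pow hnil, Matrix.vecMul_sum, Finset.sum_apply, walksToLT, sum_biUnion]
  · exact sum_congr rfl fun k _ => vecMul_pow_apply Λ f k v
  · intro i _ j _ hij
    exact disjoint_left.mpr fun l hi hj => hij <| by
      rw [mem_walksTo] at hi hj; omega

lemma phi_apply_eq_sum {Λ : Matrix V V ℝ} {N : ℕ} (hnil : Λ ^ N = 0) (Ω : Matrix V V ℝ) (v w : V) :
    phi Λ Ω v w = ∑ p ∈ walksToLT N v ×ˢ walksToLT N w,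
      Ω (p.1.headD v) (p.2.headD w) * edgeProd Λ p.1 * edgeProd Λ p.2 := by
  have hrow : ∀ a, (Ω * (1 - Λ)⁻¹) a w = (Ω a ᵥ* (1 - Λ)⁻¹) w := fun a => rfl
  calc phi Λ Ω v w = ((fun a => (Ω * (1 - Λ)⁻¹) a w) ᵥ* (1 - Λ)⁻¹) v := by
        rw [phi, Matrix.mul_assoc, Matrix.mul_apply]
        exact sum_congr rfl fun _ _ => mul_comm _ _
    _ = _ := by
        simp only [vecMul_inv_one_sub_apply hnil, hrow, sum_product, sum_mul]
        exact sum_congr rfl fun _ _ => sum_congr rfl fun _ _ => by ring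

lemma isChain_of_edgeProd_ne_zero {G : MixedGraph V} {Λ : Matrix V V ℝ}
    (hΛ : ∀ v w, (v, w) ∉ G.D → Λ v w = 0) {l : List V} (hl : edgeProd Λ l ≠ 0) :
    l.IsChain fun a b => (a, b) ∈ G.D := by
  induction l with
  | nil => exact .nil
  | cons x t ih =>
    rcases t with _ | ⟨y, t⟩
    · exact .singleton x
    · rw [edgeProd_cons_cons, mul_ne_zero_iff] at hl
      exact .cons_cons (not_imp_comm.mp (hΛ x y) hl.1) (ih hl.2)

namespace Acyclic

variable {G : MixedGraph V} (hG : G.Acyclic)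
include hG

lemma nodup_of_isChain {l : List V} (hl : l.IsChain fun a b => (a, b) ∈ G.D) : l.Nodup := by
  have : l.Pairwise (Relation.TransGen fun a b => (a, b) ∈ G.D) :=
    List.isChain_iff_pairwise.mp (hl.imp fun _ _ => .single)
  exact this.imp (S := (· ≠ ·)) fun h heq => hG _ (heq ▸ h)

lemma pow_card_eq_zero {Λ : Matrix V V ℝ} (hΛ : ∀ v w, (v, w) ∉ G.D → Λ v w = 0) :
    Λ ^ Fintype.card V = 0 := by
  ext a b
  have hrow : (Λ ^ Fintype.card V) a b = (Pi.single a 1 ᵥ* Λ ^ Fintype.card V) b := by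
    simp
  rw [hrow, vecMul_pow_apply, Matrix.zero_apply]
  refine sum_eq_zero fun l hl => ?_
  by_contra h
  have hlen := (mem_walksTo.mp hl).1
  have hchain := isChain_of_edgeProd_ne_zero hΛ (right_ne_zero_of_mul h)
  have := (hG.nodup_of_isChain hchain).length_le_card
  omega

lemma mem_walksToLT_card {l : List V} (hne : l ≠ []) (hl : l.IsChain fun a b => (a, b) ∈ G.D) :
    l ∈ walksToLT (Fintype.card V) (l.getLast hne) :=
  mem_walksToLT.mpr
    ⟨hne, (hG.nodup_of_isChain hl).length_le_card, List.getLast?_eq_some_getLast hne⟩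

end Acyclic

namespace Trek

variable {G : MixedGraph V}

lemma left_right_injective : Function.Injective fun π : G.Trek => (π.left, π.right) := by
  rintro ⟨l, r, hl, hr, b, _, _, hc⟩ ⟨l', r', _, _, b', _, _, hc'⟩ h
  obtain ⟨rfl, rfl⟩ := Prod.mk.inj h
  have : b = b' := by
    cases b <;> cases b' <;> simp only [Bool.false_eq_true, ↓reduceIte] at hc hc' ⊢
    · exact (G.B_irrefl _ (hc ▸ hc')).elim
    · exact (G.B_irrefl _ (hc' ▸ hc)).elim
  subst this
  rfl

lemma exists_of_monomial_ne_zero {Λ Ω : Matrix V V ℝ} (hΛ : ∀ v w, (v, w) ∉ G.D → Λ v w = 0)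
    (hΩ : ∀ v w, v ≠ w → (v, w) ∉ G.B → Ω v w = 0) {l r : List V} (hl : l ≠ []) (hr : r ≠ [])
    (h : Ω (l.head hl) (r.head hr) * edgeProd Λ l * edgeProd Λ r ≠ 0) :
    ∃ π : G.Trek, π.left = l ∧ π.right = r := by
  obtain ⟨⟨hΩ0, hl0⟩, hr0⟩ := mul_ne_zero_iff.mp h |>.imp_left mul_ne_zero_iff.mp
  have hlc := isChain_of_edgeProd_ne_zero hΛ hl0
  have hrc := isChain_of_edgeProd_ne_zero hΛ hr0
  by_cases hB : (l.head hl, r.head hr) ∈ G.B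
  · exact ⟨⟨l, r, hl, hr, true, hlc, hrc, by simpa using hB⟩, rfl, rfl⟩
  · have heq : l.head hl = r.head hr := by
      by_contra hne
      exact hΩ0 (hΩ _ _ hne hB)
    exact ⟨⟨l, r, hl, hr, false, hlc, hrc, by simpa using heq⟩, rfl, rfl⟩

end Trek

lemma finsum_trek_monomial {G : MixedGraph V} (hG : G.Acyclic) {Λ Ω : Matrix V V ℝ}
    (hΛ : ∀ v w, (v, w) ∉ G.D → Λ v w = 0) (hΩ : ∀ v w, v ≠ w → (v, w) ∉ G.B → Ω v w = 0)
    (v w : V) :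
    ∑ᶠ π ∈ {π : G.Trek | π.source = v ∧ π.target = w}, π.monomial Λ Ω =
      ∑ p ∈ walksToLT (Fintype.card V) v ×ˢ walksToLT (Fintype.card V) w,
        Ω (p.1.headD v) (p.2.headD w) * edgeProd Λ p.1 * edgeProd Λ p.2 := by
  set S := {π : G.Trek | π.source = v ∧ π.target = w}
  set t := walksToLT (Fintype.card V) v ×ˢ walksToLT (Fintype.card V) w
  have hmaps : Set.MapsTo (fun π : G.Trek => (π.left, π.right)) S t := by
    rintro π ⟨rfl, rfl⟩
    exact mem_product.mpr ⟨hG.mem_walksToLT_card π.left_ne π.left_chain,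
      hG.mem_walksToLT_card π.right_ne π.right_chain⟩
  have hfin : S.Finite :=
    .of_finite_image (t.finite_toSet.subset hmaps.image_subset) Trek.left_right_injective.injOn
  rw [finsum_mem_eq_finite_toFinset_sum _ hfin]
  refine sum_of_injOn _ Trek.left_right_injective.injOn (by simpa using hmaps) ?_ ?_
  · rintro ⟨l, r⟩ hp hnot
    obtain ⟨⟨hl, -, hlv⟩, ⟨hr, -, hrw⟩⟩ := (mem_product.mp hp).imp mem_walksToLT.mp mem_walksToLT.mp
    by_contra h
    simp only [List.headD_eq_head?_getD, List.head?_eq_some_head hl, List.head?_eq_some_head hr,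
      Option.getD_some] at h
    obtain ⟨π, rfl, rfl⟩ := Trek.exists_of_monomial_ne_zero hΛ hΩ hl hr h
    refine hnot ⟨π, hfin.mem_toFinset.mpr ⟨?_, ?_⟩, rfl⟩
    · exact Option.some.inj ((List.getLast?_eq_some_getLast _).symm.trans hlv)
    · exact Option.some.inj ((List.getLast?_eq_some_getLast _).symm.trans hrw)
  · intro π _
    simp [Trek.monomial, List.head?_eq_some_head π.left_ne, List.head?_eq_some_head π.right_ne]

end MixedGraph

theorem trek_rule_general {V : Type*} [Fintype V] [DecidableEq V] (G : MixedGraph V)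
    (hacyclic : G.Acyclic) (Λ Ω : Matrix V V ℝ)
    (hΛ : ∀ v w, (v, w) ∉ G.D → Λ v w = 0)
    (hΩ : ∀ v w, v ≠ w → (v, w) ∉ G.B → Ω v w = 0) :
    IsUnit (1 - Λ).det ∧
    ∀ v w : V, MixedGraph.phi Λ Ω v w =
      ∑ᶠ π ∈ {π : G.Trek | π.source = v ∧ π.target = w}, π.monomial Λ Ω := by
  have hnil := hacyclic.pow_card_eq_zero hΛ
  refine ⟨(Matrix.isUnit_iff_isUnit_det _).mp (IsNilpotent.isUnit_one_sub ⟨_, hnil⟩), fun v w => ?_⟩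
  rw [MixedGraph.phi_apply_eq_sum hnil, MixedGraph.finsum_trek_monomial hacyclic hΛ hΩ]

/-- **Trek rule**: for an acyclic mixed graph, `I - Λ` is invertible and each entry
`Σ_{v,w}` of `Σ = (I-Λ)^{-T} Ω (I-Λ)^{-1}` is the sum of the trek monomials over all treks
from `v` to `w`. -/
theorem trek_rule {V : Type*} [Fintype V] [DecidableEq V] (G : MixedGraph V)
    (hacyclic : G.Acyclic) (Λ Ω : Matrix V V ℝ)
    (hΛ : ∀ v w, (v, w) ∉ G.D → Λ v w = 0)
    (hΩsymm : Ω.IsSymm) (hΩ : ∀ v w, v ≠ w → (v, w) ∉ G.B → Ω v w = 0) :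
    IsUnit (1 - Λ).det ∧
    ∀ v w : V, MixedGraph.phi Λ Ω v w =
      ∑ᶠ π ∈ {π : G.Trek | π.source = v ∧ π.target = w}, π.monomial Λ Ω :=
  trek_rule_general G hacyclic Λ Ω hΛ hΩ
end

section
/- Let (V,D) be a directed graph on m nodes and let W,P⊆V with |W|=|P|=n. If there exists a real m×m matrix Λ with λ_vw=0 whenever v→w∉D and I−Λ invertible such that the n×n submatrix ((I−Λ)^{−1})_{W,P} has nonzero determinant, then there exist an enumeration W={w_1,…,w_n}, P={p_1,…,p_n} and directed paths ψ_1,…,ψ_n in (V,D), where ψ_i goes from w_i to p_i, such that the ψ_i have no self-intersections and are pairwise vertex-disjoint. -/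
/-!
Write `A = 1 - Λ`. Jacobi's complementary minor identity
`det A · det (A⁻¹)_{W,P} = ± det A_{Pᶜ,Wᶜ}` turns the hypothesis into `det A_{Pᶜ,Wᶜ} ≠ 0`, so
some term of its Leibniz expansion is nonzero: a bijection `f : Pᶜ → Wᶜ` with `A v (f v) ≠ 0`,
i.e. `f v = v` or `v → f v` is an edge. Following `f` from each vertex of `W` gives a walk that
leaves `W` after its first step; as `f` is injective off `P`, these walks are self-avoiding and
pairwise disjoint, so, `V` being finite, each of them reaches `P`.
-/

open scoped Classical Matrix

theorem Function.Injective.exists_sumEquiv {ι κ V : Type*} [Fintype ι] [Fintype κ] [Fintype V]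
    {p : ι → V} (hp : Function.Injective p)
    (hκ : Fintype.card ι + Fintype.card κ = Fintype.card V) :
    ∃ e : ι ⊕ κ ≃ V, ∀ i, e (Sum.inl i) = p i := by
  have hcard : Fintype.card κ = Fintype.card ↥(Set.range p)ᶜ := by
    rw [Fintype.card_compl_set, Set.card_range_of_injective hp]
    omega
  refine ⟨(Equiv.sumCongr (Equiv.ofInjective p hp) (Fintype.equivOfCardEq hcard)).trans
    (Equiv.Set.sumCompl _), fun i => ?_⟩
  simp

namespace Matrix

variable {ι κ R : Type*} [Fintype ι] [Fintype κ] [DecidableEq ι] [DecidableEq κ] [CommRing R]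

theorem det_mul_det_toBlocks₁₁_inv (B : Matrix (ι ⊕ κ) (ι ⊕ κ) R) (hB : IsUnit B.det) :
    B.det * B⁻¹.toBlocks₁₁.det = B.toBlocks₂₂.det := by
  have hBC := B.mul_nonsing_inv hB
  set C := B⁻¹
  rw [← fromBlocks_toBlocks B, ← fromBlocks_toBlocks C, fromBlocks_multiply,
    ← fromBlocks_one, fromBlocks_inj] at hBC
  obtain ⟨h₁₁, -, h₂₁, -⟩ := hBC
  have key : B * fromBlocks C.toBlocks₁₁ 0 C.toBlocks₂₁ 1 =
      fromBlocks 1 B.toBlocks₁₂ 0 B.toBlocks₂₂ := by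
    conv_lhs => rw [← fromBlocks_toBlocks B]
    rw [fromBlocks_multiply, h₁₁, h₂₁]
    simp
  simpa [det_fromBlocks_zero₁₂, det_fromBlocks_zero₂₁] using congrArg det key

theorem exists_perm_forall_ne_zero_of_det_ne_zero {M : Matrix κ κ R} (h : M.det ≠ 0) :
    ∃ σ : Equiv.Perm κ, ∀ k, M k (σ k) ≠ 0 := by
  by_contra! hM
  rw [← det_transpose, det_apply] at h
  refine h (Finset.sum_eq_zero fun σ _ => ?_)
  obtain ⟨k, hk⟩ := hM σ
  rw [Finset.prod_eq_zero (Finset.mem_univ k) (by simpa using hk), smul_zero]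

theorem exists_equiv_apply_ne_zero_of_det_inv_minor_ne_zero {V : Type*} [Fintype V]
    [DecidableEq V] {A : Matrix V V R} (hA : IsUnit A.det) {w p : ι → V}
    (hw : Function.Injective w) (hp : Function.Injective p)
    (hdet : (of fun i j => A⁻¹ (w i) (p j)).det ≠ 0) :
    ∃ f : V ≃ V, ∀ v ∉ Set.range p, f v ∉ Set.range w ∧ A v (f v) ≠ 0 := by
  have hκ : Fintype.card ι + Fintype.card (Fin (Fintype.card V - Fintype.card ι)) =
      Fintype.card V := by
    have := Fintype.card_le_of_injective w hw
    simp only [Fintype.card_fin]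
    omega
  obtain ⟨eP, heP⟩ := hp.exists_sumEquiv hκ
  obtain ⟨eW, heW⟩ := hw.exists_sumEquiv hκ
  set B := A.submatrix eP eW
  have hB : IsUnit B.det := by
    rw [← isUnit_iff_isUnit_det] at hA ⊢
    exact (isUnit_submatrix_equiv eP eW).mpr hA
  have hB₁₁ : B⁻¹.toBlocks₁₁ = of fun i j => A⁻¹ (w i) (p j) := by
    ext i j
    simp [B, toBlocks₁₁, heP, heW]
  obtain ⟨σ, hσ⟩ := exists_perm_forall_ne_zero_of_det_ne_zero (M := B.toBlocks₂₂) (by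
    rw [← det_mul_det_toBlocks₁₁_inv B hB, hB₁₁]
    exact hB.mul_right_eq_zero.not.mpr hdet)
  refine ⟨eP.symm.trans ((Equiv.sumCongr (Equiv.refl ι) σ).trans eW), fun v hv => ?_⟩
  obtain ⟨k, rfl⟩ : ∃ k, eP (Sum.inr k) = v := by
    rcases h : eP.symm v with i | k
    · exact absurd ⟨i, by rw [← heP, ← h, Equiv.apply_symm_apply]⟩ hv
    · exact ⟨k, by rw [← h, Equiv.apply_symm_apply]⟩
  simp only [Equiv.trans_apply, Equiv.symm_apply_apply, Equiv.sumCongr_apply, Sum.map_inr]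
  refine ⟨?_, hσ k⟩
  rintro ⟨i, hi⟩
  rw [← heW] at hi
  exact Sum.inl_ne_inr (eW.injective hi)

end Matrix

theorem List.getLast?_iterate_succ {α : Type*} (f : α → α) (a : α) (n : ℕ) :
    (List.iterate f a (n + 1)).getLast? = some (f^[n] a) := by
  rw [List.iterate_add f a n 1]
  simp [List.iterate]

section Linkage

variable {V : Type*} {W P : Finset V} {f : V → V}

theorem eq_and_eq_of_iterate_eq (hfW : ∀ v ∉ P, f v ∉ W) (hf : Set.InjOn f {v | v ∉ P})
    {a b : V} (ha : a ∈ W) (hb : b ∈ W) {s t : ℕ} (has : ∀ u < s, f^[u] a ∉ P)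
    (hbt : ∀ u < t, f^[u] b ∉ P) (h : f^[s] a = f^[t] b) : a = b ∧ s = t := by
  induction s generalizing t with
  | zero =>
    cases t with
    | zero => exact ⟨h, rfl⟩
    | succ t =>
      rw [Function.iterate_succ_apply'] at h
      exact absurd (h ▸ ha) (hfW _ (hbt t t.lt_succ_self))
  | succ s ih =>
    cases t with
    | zero =>
      rw [Function.iterate_succ_apply'] at h
      exact absurd (h ▸ hb) (hfW _ (has s s.lt_succ_self))
    | succ t =>
      rw [Function.iterate_succ_apply', Function.iterate_succ_apply'] at h
      obtain ⟨rfl, rfl⟩ := ih (fun u hu => has u (by omega)) (fun u hu => hbt u (by omega))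
        (hf (has s s.lt_succ_self) (hbt t t.lt_succ_self) h)
      exact ⟨rfl, rfl⟩

theorem exists_iterate_mem [Finite V] (hfW : ∀ v ∉ P, f v ∉ W) (hf : Set.InjOn f {v | v ∉ P})
    {a : V} (ha : a ∈ W) : ∃ k, f^[k] a ∈ P ∧ ∀ u < k, f^[u] a ∉ P := by
  have hex : ∃ k, f^[k] a ∈ P := by
    by_contra! hnot
    refine not_injective_infinite_finite (fun k => f^[k] a) fun s t hst => ?_
    exact (eq_and_eq_of_iterate_eq hfW hf ha ha (fun u _ => hnot u) (fun u _ => hnot u) hst).2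
  exact ⟨Nat.find hex, Nat.find_spec hex, fun u hu => Nat.find_min hex hu⟩

theorem nodup_iterate (hfW : ∀ v ∉ P, f v ∉ W) (hf : Set.InjOn f {v | v ∉ P}) {a : V}
    (ha : a ∈ W) {k : ℕ} (hk : ∀ u < k, f^[u] a ∉ P) : (List.iterate f a (k + 1)).Nodup := by
  rw [← List.range_map_iterate]
  refine List.Nodup.map_on (fun s hs t ht hst => ?_) List.nodup_range
  rw [List.mem_range] at hs ht
  exact (eq_and_eq_of_iterate_eq hfW hf ha ha (fun u hu => hk u (by omega))
    (fun u hu => hk u (by omega)) hst).2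

theorem isChain_iterate (hfW : ∀ v ∉ P, f v ∉ W) (hf : Set.InjOn f {v | v ∉ P})
    {R : V → V → Prop} (hfR : ∀ v ∉ P, f v ≠ v → R v (f v)) {a : V} (ha : a ∈ W) {k : ℕ}
    (hk : ∀ u < k, f^[u] a ∉ P) : (List.iterate f a (k + 1)).IsChain R := by
  rw [← List.range_map_iterate, List.isChain_map, List.isChain_range_succ]
  intro t ht
  rw [Function.iterate_succ_apply']
  refine hfR _ (hk t ht) fun h => ?_
  exact t.succ_ne_self (eq_and_eq_of_iterate_eq hfW hf ha ha (s := t + 1) (t := t)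
    (fun u hu => hk u (by omega)) (fun u hu => hk u (by omega))
    (by rw [Function.iterate_succ_apply', h])).2

theorem disjoint_iterate (hfW : ∀ v ∉ P, f v ∉ W) (hf : Set.InjOn f {v | v ∉ P}) {a b : V}
    (ha : a ∈ W) (hb : b ∈ W) (hab : a ≠ b) {k l : ℕ} (hk : ∀ u < k, f^[u] a ∉ P)
    (hl : ∀ u < l, f^[u] b ∉ P) :
    ∀ x ∈ List.iterate f a (k + 1), x ∉ List.iterate f b (l + 1) := by
  simp only [List.mem_iterate]
  rintro x ⟨s, hs, rfl⟩ ⟨t, ht, hst⟩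
  exact hab (eq_and_eq_of_iterate_eq hfW hf ha hb (fun u hu => hk u (by omega))
    (fun u hu => hl u (by omega)) hst).1

theorem exists_disjoint_paths [Fintype V] [DecidableEq V] (hfW : ∀ v ∉ P, f v ∉ W)
    (hf : Set.InjOn f {v | v ∉ P}) (R : V → V → Prop) (hfR : ∀ v ∉ P, f v ≠ v → R v (f v))
    {ι : Type*} [Fintype ι] (hP : P.card = Fintype.card ι) {w : ι → V}
    (hw : Function.Injective w) (hwW : Finset.univ.image w = W) :
    ∃ (p : ι → V) (ψ : ι → List V),
      Function.Injective p ∧ Finset.univ.image p = P ∧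
      (∀ i, ψ i ≠ [] ∧ (ψ i).IsChain R ∧
        (ψ i).head? = some (w i) ∧ (ψ i).getLast? = some (p i) ∧ (ψ i).Nodup) ∧
      (∀ i j, i ≠ j → ∀ x ∈ ψ i, x ∉ ψ j) := by
  have hwW' : ∀ i, w i ∈ W := fun i => hwW ▸ Finset.mem_image_of_mem w (Finset.mem_univ i)
  choose k hkP hk using fun i => exists_iterate_mem hfW hf (hwW' i)
  have hdisj : ∀ i j, i ≠ j → ∀ x ∈ List.iterate f (w i) (k i + 1),
      x ∉ List.iterate f (w j) (k j + 1) := fun i j hij =>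
    disjoint_iterate hfW hf (hwW' i) (hwW' j) (hw.ne hij) (hk i) (hk j)
  have hp : Function.Injective fun i => f^[k i] (w i) := by
    intro i j hij
    by_contra hne
    refine hdisj i j hne (f^[k i] (w i)) ?_ ?_ <;> simp only [List.mem_iterate]
    exacts [⟨k i, by omega, rfl⟩, ⟨k j, by omega, hij⟩]
  refine ⟨fun i => f^[k i] (w i), fun i => List.iterate f (w i) (k i + 1), hp, ?_,
    fun i => ⟨by simp, isChain_iterate hfW hf hfR (hwW' i) (hk i), by simp [List.iterate], ?_,
      nodup_iterate hfW hf (hwW' i) (hk i)⟩, hdisj⟩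
  · refine Finset.eq_of_subset_of_card_le (fun x hx => ?_) ?_
    · obtain ⟨i, -, rfl⟩ := Finset.mem_image.mp hx
      exact hkP i
    · rw [hP, Finset.card_image_of_injective _ hp, Finset.card_univ]
  · exact List.getLast?_iterate_succ f (w i) (k i)

end Linkage

theorem menger_from_determinant_general {V : Type*} [Fintype V] [DecidableEq V]
    (D : Finset (V × V))
    (n : ℕ) (W P : Finset V) (hP : P.card = n)
    (h : ∃ (Λ : Matrix V V ℝ) (w p : Fin n → V),
      (∀ v u, (v, u) ∉ D → Λ v u = 0) ∧ IsUnit (1 - Λ).det ∧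
      Function.Injective w ∧ Function.Injective p ∧
      Finset.univ.image w = W ∧ Finset.univ.image p = P ∧
      (Matrix.of fun i j : Fin n => (1 - Λ)⁻¹ (w i) (p j)).det ≠ 0) :
    ∃ (w p : Fin n → V) (ψ : Fin n → List V),
      Function.Injective w ∧ Function.Injective p ∧
      Finset.univ.image w = W ∧ Finset.univ.image p = P ∧
      (∀ i, ψ i ≠ [] ∧ (ψ i).Chain' (fun a b => (a, b) ∈ D) ∧
        (ψ i).head? = some (w i) ∧ (ψ i).getLast? = some (p i) ∧ (ψ i).Nodup) ∧
      (∀ i j, i ≠ j → ∀ x ∈ ψ i, x ∉ ψ j) := by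
  obtain ⟨Λ, w, p, hΛ, hunit, hw, hp, hwW, hpP, hdet⟩ := h
  obtain ⟨f, hf⟩ := Matrix.exists_equiv_apply_ne_zero_of_det_inv_minor_ne_zero hunit hw hp hdet
  have hcompl : ∀ v ∉ P, v ∉ Set.range p := by
    rintro v hv ⟨i, rfl⟩
    exact hv (hpP ▸ Finset.mem_image_of_mem p (Finset.mem_univ i))
  have hfW : ∀ v ∉ P, f v ∉ W := fun v hv hfv =>
    (hf v (hcompl v hv)).1 (by simpa [← hwW] using hfv)
  have hfD : ∀ v ∉ P, f v ≠ v → (v, f v) ∈ D := fun v hv hne => by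
    by_contra hD
    refine (hf v (hcompl v hv)).2 ?_
    rw [Matrix.sub_apply, Matrix.one_apply_ne hne.symm, hΛ _ _ hD, sub_zero]
  obtain ⟨p', ψ, hp', hp'P, hψ, hdisj⟩ := exists_disjoint_paths hfW f.injective.injOn
    (fun a b => (a, b) ∈ D) hfD (by simpa using hP) hw hwW
  exact ⟨w, p', ψ, hw, hp', hwW, hp'P, hψ, hdisj⟩

/-- If `(V, D)` is a directed graph, `W, P ⊆ V` with `|W| = |P| = n`, and there is a matrix
`Λ` supported on `D` with `I - Λ` invertible such that the submatrix `((I-Λ)^{-1})_{W,P}`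
has nonzero determinant, then there are enumerations `W = {w 1, …, w n}`,
`P = {p 1, …, p n}` and directed paths `ψ i` from `w i` to `p i` without
self-intersections that are pairwise vertex-disjoint. -/
theorem menger_from_determinant {V : Type*} [Fintype V] [DecidableEq V]
    (D : Finset (V × V)) (hD : ∀ v : V, (v, v) ∉ D)
    (n : ℕ) (W P : Finset V) (hW : W.card = n) (hP : P.card = n)
    (h : ∃ (Λ : Matrix V V ℝ) (w p : Fin n → V),
      (∀ v u, (v, u) ∉ D → Λ v u = 0) ∧ IsUnit (1 - Λ).det ∧
      Function.Injective w ∧ Function.Injective p ∧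
      Finset.univ.image w = W ∧ Finset.univ.image p = P ∧
      (Matrix.of fun i j : Fin n => (1 - Λ)⁻¹ (w i) (p j)).det ≠ 0) :
    ∃ (w p : Fin n → V) (ψ : Fin n → List V),
      Function.Injective w ∧ Function.Injective p ∧
      Finset.univ.image w = W ∧ Finset.univ.image p = P ∧
      (∀ i, ψ i ≠ [] ∧ (ψ i).Chain' (fun a b => (a, b) ∈ D) ∧
        (ψ i).head? = some (w i) ∧ (ψ i).getLast? = some (p i) ∧ (ψ i).Nodup) ∧
      (∀ i j, i ≠ j → ∀ x ∈ ψ i, x ∉ ψ j) :=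
  menger_from_determinant_general D n W P hP h
end

section
/- Let G=(V,D,B) be a mixed graph, (Λ,Ω)∈Θ, and Σ=φ_G(Λ,Ω). Let v∈V and let Y={y_1,…,y_n}⊆V∖({v}∪sib(v)) with |Y|=|pa(v)|=n; write pa(v)={p_1,…,p_n}. Define the n×n matrix A by A_ij=[(I−Λ)^T Σ]_{y_i p_j} if y_i∈htr(v) and A_ij=Σ_{y_i p_j} if y_i∉htr(v), and the vector b∈ℝ^n by b_i=[(I−Λ)^T Σ]_{y_i v} if y_i∈htr(v) and b_i=Σ_{y_i v} if y_i∉htr(v). Then A·(λ_{p_1 v},…,λ_{p_n v})^T = b. -/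
open scoped Classical Matrix

/-!
Write `Σ = φ(Λ, Ω)`. Column `v` of `Λ` vanishes off `pa(v)`, so the left-hand side is the
`(y, v)` entry of `(I - Λ)ᵀ Σ Λ`, resp. `Σ Λ`. From `(I - Λ)⁻¹ Λ = (I - Λ)⁻¹ - I` these are
`(I - Λ)ᵀ Σ - Ω` and `Σ - (I - Λ)⁻ᵀ Ω`. Here `ω_{y v} = 0` as `y ∉ {v} ∪ sib(v)`, and for
`y ∉ htr(v)` also `[(I - Λ)⁻ᵀ Ω]_{y v} = ∑_w [(I - Λ)⁻¹]_{w y} ω_{w v} = 0`: a nonzero term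
needs `w ∈ {v} ∪ sib(v)` and a directed path from `w` to `y` (the inverse of `I - Λ` stays in
the subalgebra of matrices supported on such pairs), which would put `y` in `htr(v)`.
-/

namespace Matrix

variable {K n : Type*} [Field K] [Fintype n] [DecidableEq n]

theorem nonsing_inv_mem_subalgebra {A : Subalgebra K (Matrix n n K)} {M : Matrix n n K}
    (hM : M ∈ A) : M⁻¹ ∈ A := by
  by_cases hdet : IsUnit M.det
  · have hinj : Function.Injective (LinearMap.mulLeft K (⟨M, hM⟩ : A)) := by
      intro X Y hXY
      have hMXY : M * (X : Matrix n n K) = M * Y := congrArg Subtype.val hXY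
      exact Subtype.ext (by
        simpa [← Matrix.mul_assoc, Matrix.nonsing_inv_mul _ hdet] using congrArg (M⁻¹ * ·) hMXY)
    obtain ⟨Z, hZ⟩ := LinearMap.injective_iff_surjective.mp hinj 1
    rw [Matrix.inv_eq_right_inv (congrArg Subtype.val hZ)]
    exact Z.2
  · rw [Matrix.nonsing_inv_apply_not_isUnit _ hdet]
    exact A.zero_mem

variable (K) in
def reflTransGenSubalgebra (r : n → n → Prop) : Subalgebra K (Matrix n n K) where
  carrier := {M | ∀ a b, ¬ Relation.ReflTransGen r a b → M a b = 0}
  mul_mem' {M N} hM hN a b hab := by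
    rw [mul_apply]
    refine Finset.sum_eq_zero fun c _ => ?_
    by_cases hac : Relation.ReflTransGen r a c
    · rw [hN c b fun hcb => hab (hac.trans hcb), mul_zero]
    · rw [hM a c hac, zero_mul]
  add_mem' {M N} hM hN a b hab := by
    rw [add_apply, hM a b hab, hN a b hab, add_zero]
  algebraMap_mem' x a b hab := by
    have hne : a ≠ b := by rintro rfl; exact hab .refl
    simp [algebraMap_matrix_apply, hne]

theorem inv_one_sub_apply_eq_zero_of_not_reflTransGen {r : n → n → Prop} {Λ : Matrix n n K}
    (hΛ : ∀ a b, ¬ r a b → Λ a b = 0) {a b : n} (hab : ¬ Relation.ReflTransGen r a b) :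
    (1 - Λ)⁻¹ a b = 0 := by
  have hmem : 1 - Λ ∈ reflTransGenSubalgebra K r := by
    intro c d hcd
    have hne : c ≠ d := by rintro rfl; exact hcd .refl
    rw [sub_apply, one_apply_ne hne, hΛ c d fun h => hcd (.single h), sub_zero]
  exact nonsing_inv_mem_subalgebra hmem a b hab

theorem sum_apply_mul_apply_eq_mul_apply {R ι : Type*} [CommRing R] [Fintype ι]
    (X Λ : Matrix n n R) {s : Finset n} {p : ι → n} (hp : Function.Injective p)
    (hps : Finset.univ.image p = s) {a b : n} (hΛ : ∀ w ∉ s, Λ w b = 0) :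
    ∑ j, X a (p j) * Λ (p j) b = (X * Λ) a b := by
  calc ∑ j, X a (p j) * Λ (p j) b = ∑ w ∈ s, X a w * Λ w b := by
        rw [← hps, Finset.sum_image fun j _ k _ h => hp h]
    _ = (X * Λ) a b :=
        Finset.sum_subset (Finset.subset_univ s) fun w _ hw => by rw [hΛ w hw, mul_zero]

end Matrix

namespace MixedGraph

open Matrix

section Algebra

variable {V R : Type*} [Fintype V] [DecidableEq V] [CommRing R] {Λ : Matrix V V R}

theorem inv_one_sub_mul_self (hΛ : IsUnit (1 - Λ).det) : (1 - Λ)⁻¹ * Λ = (1 - Λ)⁻¹ - 1 := by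
  calc (1 - Λ)⁻¹ * Λ = (1 - Λ)⁻¹ * (1 - (1 - Λ)) := by rw [sub_sub_cancel]
    _ = (1 - Λ)⁻¹ - 1 := by rw [Matrix.mul_sub, Matrix.mul_one, nonsing_inv_mul _ hΛ]

theorem phi_mul (Ω : Matrix V V R) (hΛ : IsUnit (1 - Λ).det) :
    phi Λ Ω * Λ = phi Λ Ω - ((1 - Λ)⁻¹)ᵀ * Ω := by
  rw [phi, Matrix.mul_assoc, inv_one_sub_mul_self hΛ, Matrix.mul_sub, Matrix.mul_one]

theorem transpose_one_sub_mul_phi_mul (Ω : Matrix V V R) (hΛ : IsUnit (1 - Λ).det) :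
    (1 - Λ)ᵀ * phi Λ Ω * Λ = (1 - Λ)ᵀ * phi Λ Ω - Ω := by
  have hcancel : (1 - Λ)ᵀ * ((1 - Λ)⁻¹)ᵀ = 1 := by
    rw [← transpose_mul, nonsing_inv_mul _ hΛ, transpose_one]
  rw [Matrix.mul_assoc, phi_mul Ω hΛ, Matrix.mul_sub, ← Matrix.mul_assoc, hcancel,
    Matrix.one_mul]

end Algebra

variable {V : Type*} [Fintype V] [DecidableEq V] {G : MixedGraph V}

theorem mem_pa {v w : V} : w ∈ G.pa v ↔ (w, v) ∈ G.D := by simp [pa]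

theorem mem_sib {v w : V} : w ∈ G.sib v ↔ (w, v) ∈ G.B := by simp [sib]

/-- The half-trek `v → w → ⋯ → y`, or `v ↔ w → ⋯ → y`, along a nonempty directed path. -/
theorem mem_htr_of_reflTransGen {v w y : V} (hyv : y ≠ v) (hys : y ∉ G.sib v)
    (hw : w = v ∨ w ∈ G.sib v) (hwy : w ≠ y)
    (hpath : Relation.ReflTransGen (fun a b => (a, b) ∈ G.D) w y) : y ∈ G.htr v := by
  obtain ⟨l, hchain, hlast⟩ := List.exists_isChain_cons_of_relationReflTransGen hpath
  have hl : l ≠ [] := by rintro rfl; exact hwy hlast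
  refine ⟨hyv, hys, ⟨[v], w :: l, List.cons_ne_nil _ _, List.cons_ne_nil _ _,
    decide ((v, w) ∈ G.B), List.isChain_singleton v, hchain, ?_⟩, rfl, hlast, ?_, ?_⟩
  · by_cases hB : (v, w) ∈ G.B
    · simp [hB]
    · have hwv : w = v := hw.resolve_right fun h => hB (G.B_symm w v (mem_sib.mp h))
      simp [hwv]
  · simp [Trek.IsHalfTrek, Trek.leftSet]
  · simpa [Trek.nEdges, Nat.one_le_iff_ne_zero] using hl

theorem inv_transpose_mul_apply_eq_zero_of_not_mem_htr {Λ Ω : Matrix V V ℝ}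
    (hΛ : ∀ a b, (a, b) ∉ G.D → Λ a b = 0) (hΩ : ∀ a b, a ≠ b → (a, b) ∉ G.B → Ω a b = 0)
    {v y : V} (hyv : y ≠ v) (hys : y ∉ G.sib v) (hhtr : y ∉ G.htr v) :
    (((1 - Λ)⁻¹)ᵀ * Ω : Matrix V V ℝ) y v = 0 := by
  rw [mul_apply]
  refine Finset.sum_eq_zero fun w _ => ?_
  by_cases hw : w = v ∨ w ∈ G.sib v
  · have hwy : w ≠ y := by rintro rfl; exact hw.elim hyv hys
    rw [transpose_apply, inv_one_sub_apply_eq_zero_of_not_reflTransGen hΛ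
      fun hpath => hhtr (mem_htr_of_reflTransGen hyv hys hw hwy hpath), zero_mul]
  · rw [not_or] at hw
    rw [hΩ w v hw.1 (mt mem_sib.mpr hw.2), mul_zero]

end MixedGraph

theorem linear_system_for_column_general {V : Type*} [Fintype V] [DecidableEq V]
    (G : MixedGraph V) (θ : Matrix V V ℝ × Matrix V V ℝ) (hθ : θ ∈ G.Theta)
    (v : V) (n : ℕ) (y p : Fin n → V)
    (hp : Function.Injective p)
    (hpa : Finset.univ.image p = G.pa v)
    (hYv : ∀ i, y i ≠ v ∧ y i ∉ G.sib v) :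
    ∀ i : Fin n,
      (∑ j : Fin n,
        (if y i ∈ G.htr v then
            (((1 - θ.1)ᵀ * MixedGraph.phi θ.1 θ.2 : Matrix V V ℝ)) (y i) (p j)
          else
            MixedGraph.phi θ.1 θ.2 (y i) (p j)) * θ.1 (p j) v) =
      (if y i ∈ G.htr v then
          (((1 - θ.1)ᵀ * MixedGraph.phi θ.1 θ.2 : Matrix V V ℝ)) (y i) v
        else
          MixedGraph.phi θ.1 θ.2 (y i) v) := by
  obtain ⟨⟨hΛ, hdet⟩, -, hΩ⟩ := hθ
  intro i
  obtain ⟨hyv, hys⟩ := hYv i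
  have hcol : ∀ w ∉ G.pa v, θ.1 w v = 0 := fun w hw => hΛ w v (mt MixedGraph.mem_pa.mpr hw)
  split_ifs with hhtr
  · rw [Matrix.sum_apply_mul_apply_eq_mul_apply _ _ hp hpa hcol,
      MixedGraph.transpose_one_sub_mul_phi_mul θ.2 hdet, Matrix.sub_apply,
      hΩ _ _ hyv (mt MixedGraph.mem_sib.mpr hys), sub_zero]
  · rw [Matrix.sum_apply_mul_apply_eq_mul_apply _ _ hp hpa hcol, MixedGraph.phi_mul θ.2 hdet,
      Matrix.sub_apply,
      MixedGraph.inv_transpose_mul_apply_eq_zero_of_not_mem_htr hΛ hΩ hyv hys hhtr, sub_zero]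

/-- The linear equation system recovering the `v`-th column of `Λ`: with
`A i j = [(I-Λ)ᵀ Σ]_{y i, p j}` if `y i ∈ htr(v)` and `A i j = Σ_{y i, p j}` otherwise, and
`b i = [(I-Λ)ᵀ Σ]_{y i, v}` if `y i ∈ htr(v)` and `b i = Σ_{y i, v}` otherwise, one has
`A ⬝ Λ_{pa(v), v} = b`. -/
theorem linear_system_for_column {V : Type*} [Fintype V] [DecidableEq V]
    (G : MixedGraph V) (θ : Matrix V V ℝ × Matrix V V ℝ) (hθ : θ ∈ G.Theta)
    (v : V) (n : ℕ) (y p : Fin n → V)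
    (hy : Function.Injective y) (hp : Function.Injective p)
    (hpa : Finset.univ.image p = G.pa v)
    (hYv : ∀ i, y i ≠ v ∧ y i ∉ G.sib v) :
    ∀ i : Fin n,
      (∑ j : Fin n,
        (if y i ∈ G.htr v then
            (((1 - θ.1)ᵀ * MixedGraph.phi θ.1 θ.2 : Matrix V V ℝ)) (y i) (p j)
          else
            MixedGraph.phi θ.1 θ.2 (y i) (p j)) * θ.1 (p j) v) =
      (if y i ∈ G.htr v then
          (((1 - θ.1)ᵀ * MixedGraph.phi θ.1 θ.2 : Matrix V V ℝ)) (y i) v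
        else
          MixedGraph.phi θ.1 θ.2 (y i) v) :=
  linear_system_for_column_general G θ hθ v n y p hp hpa hYv
end
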